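/- Let 0 < b < 1, a > 0, k₀ ≥ 0 be real numbers and let l ≤ k be positive integers with a ≤ (l + k₀)^b. Then ∏_{i=l}^{k} (1 − a/(i + k₀)^b) ≤ exp( (a/(1 − b)) · ((l + k₀)^{1−b} − (k + k₀ + 1)^{1−b}) ). -/

import Mathlib

/-!
Since `1 - x ≤ exp (-x)` and every factor is nonnegative, the product is at most
`exp (-a ∑ (i + k₀)^(-b))`. Bernoulli's inequality `(1 + 1/x)^(1-b) ≤ 1 + (1-b)/x` bounds each
increment of `x ↦ x^(1-b)` over `[x, x + 1]` by `(1-b) x^(-b)`, so the sum telescopes to at least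
`((k + k₀ + 1)^(1-b) - (l + k₀)^(1-b)) / (1 - b)`.
-/

open Real Finset

theorem Real.rpow_add_one_sub_rpow_le {x p : ℝ} (hx : 0 < x) (hp0 : 0 ≤ p) (hp1 : p ≤ 1) :
    (x + 1) ^ p - x ^ p ≤ p * x ^ (p - 1) := by
  have hsplit : (x + 1) ^ p = x ^ p * (1 + x⁻¹) ^ p := by
    rw [← mul_rpow hx.le (by positivity), mul_add, mul_inv_cancel₀ hx.ne', mul_one]
  have hbernoulli : (1 + x⁻¹) ^ p ≤ 1 + p * x⁻¹ :=
    rpow_one_add_le_one_add_mul_self (by linarith [inv_pos.mpr hx]) hp0 hp1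
  have hpow : x ^ p * x⁻¹ = x ^ (p - 1) := by
    rw [rpow_sub_one hx.ne', div_eq_mul_inv]
  calc (x + 1) ^ p - x ^ p
      = x ^ p * (1 + x⁻¹) ^ p - x ^ p := by rw [hsplit]
    _ ≤ x ^ p * (1 + p * x⁻¹) - x ^ p := by gcongr
    _ = p * x ^ (p - 1) := by rw [← hpow]; ring

theorem Real.rpow_add_sub_rpow_le_sum_rpow_neg {b c : ℝ} (hb0 : 0 ≤ b) (hb1 : b ≤ 1)
    {l k : ℕ} (hlk : l ≤ k) (hlc : 0 < (l : ℝ) + c) :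
    ((k : ℝ) + c + 1) ^ (1 - b) - ((l : ℝ) + c) ^ (1 - b) ≤
      (1 - b) * ∑ i ∈ Icc l k, ((i : ℝ) + c) ^ (-b) := by
  have htelescope := sum_Icc_sub hlk fun i : ℕ ↦ ((i : ℝ) + c) ^ (1 - b)
  push_cast at htelescope
  rw [add_right_comm, ← htelescope, mul_sum]
  refine sum_le_sum fun i hi ↦ ?_
  have hic : 0 < (i : ℝ) + c := by
    have : (l : ℝ) ≤ i := by exact_mod_cast (mem_Icc.mp hi).1
    linarith
  have := rpow_add_one_sub_rpow_le hic (by linarith) (by linarith : 1 - b ≤ 1)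
  rwa [sub_sub_cancel_left, add_right_comm] at this

theorem Real.prod_one_sub_le_exp_neg_sum {ι : Type*} (s : Finset ι) (x : ι → ℝ)
    (hx : ∀ i ∈ s, x i ≤ 1) : ∏ i ∈ s, (1 - x i) ≤ exp (-∑ i ∈ s, x i) := by
  rw [← sum_neg_distrib, exp_sum]
  exact prod_le_prod (fun i hi ↦ sub_nonneg.mpr (hx i hi)) fun i _ ↦ one_sub_le_exp_neg (x i)

/-- The `b ∈ (0,1)` case of the paper's Lemma 5.5 (Wang–Ke–Zhang):
`∏_{i=l}^{k} (1 - a/(i + k₀)^b) ≤ exp((a/(1-b)) ((l + k₀)^{1-b} - (k + k₀ + 1)^{1-b}))`. -/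
theorem stmt9 (b a k₀ : ℝ) (hb0 : 0 < b) (hb1 : b < 1) (ha : 0 < a) (hk₀ : 0 ≤ k₀)
    (l k : ℕ) (hl : 0 < l) (hlk : l ≤ k) (hal : a ≤ ((l : ℝ) + k₀) ^ b) :
    ∏ i ∈ Finset.Icc l k, (1 - a / ((i : ℝ) + k₀) ^ b) ≤
      Real.exp (a / (1 - b) *
        (((l : ℝ) + k₀) ^ (1 - b) - ((k : ℝ) + k₀ + 1) ^ (1 - b))) := by
  have hl₀ : 0 < (l : ℝ) + k₀ := by positivity
  have hfactor : ∀ i ∈ Icc l k, a / ((i : ℝ) + k₀) ^ b ≤ 1 := fun i hi ↦ by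
    have hlk₀ : (l : ℝ) + k₀ ≤ i + k₀ := by gcongr; exact_mod_cast (mem_Icc.mp hi).1
    rw [div_le_one (rpow_pos_of_pos (hl₀.trans_le hlk₀) b)]
    exact hal.trans (rpow_le_rpow hl₀.le hlk₀ hb0.le)
  have hsum : ∑ i ∈ Icc l k, a / ((i : ℝ) + k₀) ^ b =
      a * ∑ i ∈ Icc l k, ((i : ℝ) + k₀) ^ (-b) := by
    rw [mul_sum]
    refine sum_congr rfl fun i _ ↦ ?_
    rw [rpow_neg (by positivity), div_eq_mul_inv]
  have htelescope := rpow_add_sub_rpow_le_sum_rpow_neg hb0.le hb1.le hlk hl₀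
  refine (prod_one_sub_le_exp_neg_sum _ _ hfactor).trans (exp_le_exp.mpr ?_)
  rw [hsum, div_mul_eq_mul_div, le_div_iff₀ (by linarith)]
  nlinarith
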